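/- For every h ≥ 1 and all m, n ∈ ℕ, the encoding μ_h is injective: μ_h(m) = μ_h(n) implies m = n, where μ_h(n) for h ≥ 2 is defined as the opening tag ⟨h, followed by the concatenation over i = 0, …, L(n)−1 of μ_{h−1}(i) · bit(i, n−1), followed by the closing tag h⟩ (and μ_h(0) = ⟨h h⟩). -/
import Mathlib


/-- Alphabet: bits 0, 1 and tag symbols ⟨i, i⟩ for i ≥ 1. -/
inductive MuSym where
  | zero | one | topen (i : ℕ) | tclose (i : ℕ)
deriving DecidableEq

/-- The `i`-th bit of `k`, as a letter. -/
def bitL (i k : ℕ) : MuSym := if Odd (k / 2 ^ i) then MuSym.one else MuSym.zero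

/-- Binary length of `n - 1`. -/
def L : ℕ → ℕ
  | 0 => 0
  | 1 => 1
  | n => Nat.log 2 (n - 1) + 1

/-- The encoding μ_h(n).  μ_1 is the base case; for h ≥ 2, μ_h(n) is the
opening tag ⟨h, the concatenation over i < L(n) of μ_{h-1}(i)·bit(i,n-1),
then the closing tag h⟩ (and μ_h(0) = ⟨h h⟩). -/
def mu : ℕ → ℕ → List MuSym
  | 0, _ => []
  | 1, n =>
      if n = 0 then [MuSym.topen 1, MuSym.tclose 1]
      else MuSym.topen 1 ::
        ((List.range (L n)).map (fun i => bitL i (n - 1)) ++ [MuSym.tclose 1])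
  | h + 2, n =>
      if n = 0 then [MuSym.topen (h + 2), MuSym.tclose (h + 2)]
      else MuSym.topen (h + 2) ::
        (((List.range (L n)).map
            (fun i => mu (h + 1) i ++ [bitL i (n - 1)])).flatten
          ++ [MuSym.tclose (h + 2)])

lemma mu_head (h n : ℕ) (hh : 1 ≤ h) : ∃ t, mu h n = MuSym.topen h :: t := by
  match h, hh with
  | 1, _ =>
    by_cases hn : n = 0 <;> simp [mu, hn]
  | h + 2, _ =>
    by_cases hn : n = 0 <;> simp [mu, hn]

lemma L_pos (n : ℕ) (hn : 1 ≤ n) : 1 ≤ L n := by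
  match n, hn with
  | 1, _ => simp [L]
  | (m+2), _ => simp [L]

lemma lt_two_pow_L (n : ℕ) (hn : 1 ≤ n) : n - 1 < 2 ^ L n := by
  match n, hn with
  | 1, _ => simp [L]
  | (m+2), _ =>
    show m + 1 < 2 ^ (Nat.log 2 (m+1) + 1)
    exact Nat.lt_pow_succ_log_self one_lt_two _

lemma bits_inj (m n : ℕ) (hm : 1 ≤ m) (hn : 1 ≤ n) (hL : L m = L n)
    (hb : ∀ i < L m, bitL i (m-1) = bitL i (n-1)) : m = n := by
  have key : m - 1 = n - 1 := by
    apply Nat.eq_of_testBit_eq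
    intro i
    by_cases hi : i < L m
    · have := hb i hi
      simp only [bitL, Nat.odd_iff] at this
      simp only [Nat.testBit_eq_decide_div_mod_eq]
      by_cases h1 : (m-1) / 2 ^ i % 2 = 1 <;> by_cases h2 : (n-1) / 2 ^ i % 2 = 1 <;>
        simp [h1, h2] at this ⊢
    · have h1 : m - 1 < 2 ^ i :=
        lt_of_lt_of_le (lt_two_pow_L m hm) (Nat.pow_le_pow_right (by norm_num) (by omega))
      have h2 : n - 1 < 2 ^ i :=
        lt_of_lt_of_le (lt_two_pow_L n hn) (Nat.pow_le_pow_right (by norm_num) (by omega; ))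
      rw [Nat.testBit_lt_two_pow h1, Nat.testBit_lt_two_pow h2]
  omega

lemma map_range_eq {α} {f g : ℕ → α} {a b : ℕ}
    (h : (List.range a).map f = (List.range b).map g) : a = b ∧ ∀ i < a, f i = g i := by
  have hl : a = b := by
    have := congrArg List.length h; simpa using this
  refine ⟨hl, fun i hi => ?_⟩
  subst hl
  have hi1 : i < ((List.range a).map f).length := by simpa using hi
  have hi2 : i < ((List.range a).map g).length := by simpa using hi
  have : ((List.range a).map f)[i]'hi1 = ((List.range a).map g)[i]'hi2 := by
    simp only [h]
  simpa using this

lemma key_lemma (h : ℕ) : ∀ a b s (β γ : ℕ → MuSym),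
    (((List.range' s a).map (fun i => mu (h+1) i ++ [β i])).flatten ++ [MuSym.tclose (h+2)]
      = ((List.range' s b).map (fun i => mu (h+1) i ++ [γ i])).flatten ++ [MuSym.tclose (h+2)])
    → a = b ∧ ∀ i, s ≤ i → i < s + a → β i = γ i := by
  intro a
  induction a with
  | zero =>
    intro b s β γ heq
    cases b with
    | zero => exact ⟨rfl, by omega⟩
    | succ b =>
      exfalso
      obtain ⟨t, ht⟩ := mu_head (h+1) s (by omega)
      simp [List.range'_succ, ht] at heq
  | succ a ih =>
    intro b s β γ heq
    cases b with
    | zero =>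
      exfalso
      obtain ⟨t, ht⟩ := mu_head (h+1) s (by omega)
      simp [List.range'_succ, ht] at heq
    | succ b =>
      rw [List.range'_succ, List.range'_succ] at heq
      simp only [List.map_cons, List.flatten_cons, List.append_assoc] at heq
      have heq2 := List.append_cancel_left heq
      simp only [List.cons_append, List.nil_append] at heq2
      injection heq2 with hβγ htail
      obtain ⟨hab, hrest⟩ := ih b (s+1) β γ (by simpa [List.append_assoc] using htail)
      refine ⟨by omega, fun i h1 h2 => ?_⟩
      rcases eq_or_lt_of_le h1 with rfl | hlt
      · exact hβγ
      · exact hrest i (by omega) (by omega)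

theorem stmt_13 (h : ℕ) (hh : 1 ≤ h) : Function.Injective (mu h) := by
  intro m n heq
  match h, hh with
  | 1, _ =>
    by_cases hm : m = 0 <;> by_cases hn : n = 0
    · omega
    · exfalso
      have hLn := L_pos n (by omega)
      have := congrArg List.length heq
      simp [mu, hm, hn] at this
      omega
    · exfalso
      have hLm := L_pos m (by omega)
      have := congrArg List.length heq
      simp [mu, hm, hn] at this
      omega
    · simp only [mu, hm, hn, if_neg] at heq
      injection heq with _ heq
      have := List.append_cancel_right heq
      obtain ⟨hL, hb⟩ := map_range_eq this
      exact bits_inj m n (by omega) (by omega) hL hb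
  | h + 2, _ =>
    by_cases hm : m = 0 <;> by_cases hn : n = 0
    · omega
    · exfalso
      simp only [mu, hm, hn, if_true, if_neg hn] at heq
      obtain ⟨t, ht⟩ : ∃ t, ((List.range (L n)).map
          (fun i => mu (h + 1) i ++ [bitL i (n - 1)])).flatten
          = MuSym.topen (h+1) :: t := by
        have hLn := L_pos n (by omega)
        obtain ⟨t, ht⟩ := mu_head (h+1) 0 (by omega)
        cases' e : L n with k
        · omega
        · simp [List.range_succ_eq_map, ht]
      rw [ht] at heq
      simp at heq
    · exfalso
      simp only [mu, hn, hm, if_true, if_neg hm] at heq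
      obtain ⟨t, ht⟩ : ∃ t, ((List.range (L m)).map
          (fun i => mu (h + 1) i ++ [bitL i (m - 1)])).flatten
          = MuSym.topen (h+1) :: t := by
        have hLm := L_pos m (by omega)
        obtain ⟨t, ht⟩ := mu_head (h+1) 0 (by omega)
        cases' e : L m with k
        · omega
        · simp [List.range_succ_eq_map, ht]
      rw [ht] at heq
      simp at heq
    · simp only [mu, hm, hn, if_neg] at heq
      injection heq with _ heq
      rw [List.range_eq_range', List.range_eq_range'] at heq
      obtain ⟨hL, hb⟩ := key_lemma h (L m) (L n) 0
        (fun i => bitL i (m-1)) (fun i => bitL i (n-1)) heq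
      exact bits_inj m n (by omega) (by omega) hL (fun i hi => hb i (by omega) (by omega))
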